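/- For ω > 0 and -2√ω < c < 2√ω, the momentum of the soliton profile is P(φ_{ω,c}) = (1/2)Im∫_ℝ φ_{ω,c}·conj(∂_x φ_{ω,c}) dx = √(4ω - c²). -/

import Mathlib

/-- The real soliton profile `ϕ_{ω,c}` of the derivative NLS. -/
noncomputable def varphi (ω c x : ℝ) : ℝ :=
  (Real.sqrt ω / (4 * ω - c ^ 2)
      * (Real.cosh (x * Real.sqrt (4 * ω - c ^ 2)) - c / (2 * Real.sqrt ω)))
    ^ (-(1 / 2 : ℝ))

/-- The complex soliton profile
`φ_{ω,c}(x) = ϕ(x)·exp(i((c/2)x - (1/4)∫_{-∞}^x ϕ²))`. -/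
noncomputable def solProfile (ω c : ℝ) (x : ℝ) : ℂ :=
  ((varphi ω c x : ℝ) : ℂ) *
    Complex.exp (Complex.I *
      (((c / 2) * x - (1 / 4) * ∫ ξ in Set.Iic x, (varphi ω c ξ) ^ 2 : ℝ) : ℂ))

/-!
Write `φ = ϕ e^{iθ}` with `θ' = c/2 - ϕ²/4`; then
`Im(φ · conj φ') = -θ' ϕ² = -(c/2) ϕ² + ϕ⁴/4`.
With `a = √ω`, `b = c/2`, `k = √(4ω - c²)` one has `ϕ² = k² / (a cosh(kx) - b)`, and since
`k² = 4(a² - b²)` the density `-b ϕ² + ϕ⁴/4` is exactly the derivative of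
`a k sinh(kx) / (a cosh(kx) - b)`, which tends to `±k` at `±∞`. So the integral is `2k`.
-/

open Real Filter Topology MeasureTheory Set ComplexConjugate

theorem hasDerivAt_setIntegral_Iic {E : Type*} [NormedAddCommGroup E] [NormedSpace ℝ E]
    [CompleteSpace E] {f : ℝ → E} {x : ℝ} (hf : Integrable f) (hfx : ContinuousAt f x) :
    HasDerivAt (fun y => ∫ t in Iic y, f t) (f x) x := by
  have hsplit : (fun y => ∫ t in Iic y, f t)
      = fun y => (∫ t in Iic 0, f t) + ∫ t in 0..y, f t := by
    funext y
    rw [← intervalIntegral.integral_Iic_sub_Iic hf.integrableOn hf.integrableOn]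
    abel
  rw [hsplit]
  exact (intervalIntegral.integral_hasDerivAt_right hf.intervalIntegrable
    hf.aestronglyMeasurable.stronglyMeasurableAtFilter hfx).const_add _

theorem im_mul_conj_deriv_of_eq_ofReal_mul_exp {u : ℝ → ℂ} {ϕ θ : ℝ → ℝ} {θ' x : ℝ}
    (hu : u = fun y => (ϕ y : ℂ) * Complex.exp (Complex.I * θ y))
    (hϕ : DifferentiableAt ℝ ϕ x) (hθ : HasDerivAt θ θ' x) :
    (u x * conj (deriv u x)).im = -(θ' * ϕ x ^ 2) := by
  set E := Complex.exp (Complex.I * θ x)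
  have hd : HasDerivAt u (((deriv ϕ x : ℝ) : ℂ) * E + ϕ x * (E * (Complex.I * θ'))) x := by
    rw [hu]
    exact hϕ.hasDerivAt.ofReal_comp.mul (hθ.ofReal_comp.const_mul Complex.I).cexp
  have hux : u x = ϕ x * E := by rw [hu]
  have hunit : E * conj E = 1 := by
    rw [← Complex.exp_conj, ← Complex.exp_add]
    simp
  calc (u x * conj (deriv u x)).im
      = ((((ϕ x * deriv ϕ x : ℝ) : ℂ) - Complex.I * ((θ' * ϕ x ^ 2 : ℝ) : ℂ))
          * (E * conj E)).im := by
        rw [hd.deriv, hux]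
        simp only [map_add, map_mul, Complex.conj_I, Complex.conj_ofReal]
        push_cast
        ring_nf
    _ = -(θ' * ϕ x ^ 2) := by simp [hunit, -Complex.ofReal_pow]

theorem one_add_sq_le_four_mul_cosh (y : ℝ) : 1 + y ^ 2 ≤ 4 * cosh y := by
  rw [← cosh_abs, cosh_eq, ← sq_abs]
  nlinarith [quadratic_le_exp_of_nonneg (abs_nonneg y), exp_pos (-|y|), abs_nonneg y]

/-- `ϕ_{ω,c}²` in the variables `a = √ω`, `b = c / 2`, `k = √(4ω - c²)`. -/
noncomputable def profileSq (a b k x : ℝ) : ℝ := k ^ 2 / (a * cosh (k * x) - b)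

noncomputable def momentumPrimitive (a b k x : ℝ) : ℝ :=
  a * k * sinh (k * x) / (a * cosh (k * x) - b)

section Profile

variable {a b k : ℝ}

theorem sub_le_mul_cosh_sub (ha : 0 ≤ a) (y : ℝ) : a - b ≤ a * cosh y - b := by
  nlinarith [one_le_cosh y]

theorem mul_cosh_sub_pos (hb : |b| < a) (y : ℝ) : 0 < a * cosh y - b := by
  have := abs_lt.1 hb
  linarith [sub_le_mul_cosh_sub (b := b) (by linarith : 0 ≤ a) y]

theorem profileSq_pos (hb : |b| < a) (hk : 0 < k) (x : ℝ) : 0 < profileSq a b k x :=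
  div_pos (by positivity) (mul_cosh_sub_pos hb _)

theorem differentiable_profileSq (hb : |b| < a) : Differentiable ℝ (profileSq a b k) :=
  fun x => (differentiableAt_const _).div (by fun_prop) (mul_cosh_sub_pos hb _).ne'

theorem profileSq_le (hb : |b| < a) (x : ℝ) : profileSq a b k x ≤ k ^ 2 / (a - b) := by
  have := abs_lt.1 hb
  exact div_le_div_of_nonneg_left (sq_nonneg k) (by linarith)
    (sub_le_mul_cosh_sub (by linarith) _)

theorem profileSq_le_inv_one_add_sq (hb : |b| < a) (x : ℝ) :
    profileSq a b k x ≤ 4 * k ^ 2 / (a - |b|) * (1 + (k * x) ^ 2)⁻¹ := by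
  have hab : 0 < a - |b| := by linarith
  have hcosh : (a - |b|) * (1 + (k * x) ^ 2) ≤ 4 * (a * cosh (k * x) - b) := by
    nlinarith [mul_nonneg hab.le (sub_nonneg.2 (one_add_sq_le_four_mul_cosh (k * x))),
      mul_nonneg (abs_nonneg b) (sub_nonneg.2 (one_le_cosh (k * x))), le_abs_self b]
  rw [profileSq, ← div_eq_mul_inv, div_div,
    div_le_div_iff₀ (mul_cosh_sub_pos hb _) (by positivity)]
  nlinarith [mul_le_mul_of_nonneg_left hcosh (sq_nonneg k)]

theorem integrable_profileSq (hb : |b| < a) (hk : 0 < k) : Integrable (profileSq a b k) := by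
  refine ((integrable_inv_one_add_sq.comp_mul_left' hk.ne').const_mul
    (4 * k ^ 2 / (a - |b|))).mono' (differentiable_profileSq hb).continuous.aestronglyMeasurable
    (.of_forall fun x => ?_)
  rw [Real.norm_of_nonneg (profileSq_pos hb hk x).le]
  exact profileSq_le_inv_one_add_sq hb x

theorem integrable_profileSq_sq (hb : |b| < a) (hk : 0 < k) :
    Integrable (fun x => profileSq a b k x ^ 2) := by
  refine ((integrable_profileSq hb hk).const_mul (k ^ 2 / (a - b))).mono'
    ((differentiable_profileSq hb).continuous.pow 2).aestronglyMeasurable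
    (.of_forall fun x => ?_)
  have hpos := (profileSq_pos hb hk x).le
  rw [Real.norm_of_nonneg (by positivity), sq]
  exact mul_le_mul_of_nonneg_right (profileSq_le hb x) hpos

theorem hasDerivAt_momentumPrimitive (hb : |b| < a) (hk : k ^ 2 = 4 * (a ^ 2 - b ^ 2))
    (x : ℝ) :
    HasDerivAt (momentumPrimitive a b k)
      (-b * profileSq a b k x + profileSq a b k x ^ 2 / 4) x := by
  have hD := (mul_cosh_sub_pos hb (k * x)).ne'
  have hlin : HasDerivAt (fun x => k * x) k x := by simpa using (hasDerivAt_id x).const_mul k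
  have hsinh := ((hasDerivAt_sinh (k * x)).comp x hlin).const_mul (a * k)
  have hcosh := (((hasDerivAt_cosh (k * x)).comp x hlin).const_mul a).sub_const b
  refine (hsinh.div hcosh hD).congr_deriv ?_
  simp only [profileSq, Function.comp_apply]
  field_simp
  linear_combination (4 * a ^ 2 * k ^ 2) * cosh_sq_sub_sinh_sq (k * x) - k ^ 2 * hk

theorem momentumPrimitive_eq_of_exp (hb : |b| < a) (x : ℝ) :
    momentumPrimitive a b k x = a * k * (1 - exp (-(k * x)) ^ 2)
      / (a * (1 + exp (-(k * x)) ^ 2) - 2 * b * exp (-(k * x))) := by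
  have hE := exp_pos (k * x)
  have hD : 0 < a * ((exp (k * x) + (exp (k * x))⁻¹) / 2) - b := by
    simpa only [cosh_eq, exp_neg] using mul_cosh_sub_pos hb (k * x)
  have hD' : 0 < a * (exp (k * x) ^ 2 + 1) - 2 * b * exp (k * x) := by
    field_simp at hD
    linarith
  rw [momentumPrimitive, sinh_eq, cosh_eq, exp_neg]
  field_simp

theorem tendsto_momentumPrimitive_atTop (hb : |b| < a) (hk : 0 < k) :
    Tendsto (momentumPrimitive a b k) atTop (𝓝 k) := by
  have ha : a ≠ 0 := (lt_of_le_of_lt (abs_nonneg b) hb).ne'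
  have hexp : Tendsto (fun x => exp (-(k * x))) atTop (𝓝 0) :=
    tendsto_exp_neg_atTop_nhds_zero.comp (tendsto_id.const_mul_atTop hk)
  have hq : ContinuousAt (fun u => a * k * (1 - u ^ 2) / (a * (1 + u ^ 2) - 2 * b * u)) 0 := by
    fun_prop (disch := simpa using ha)
  have hq0 : a * k * (1 - 0 ^ 2) / (a * (1 + 0 ^ 2) - 2 * b * 0) = k := by
    norm_num [ha]
  have hlim := hq.tendsto.comp hexp
  rw [hq0] at hlim
  exact hlim.congr fun x => (momentumPrimitive_eq_of_exp hb x).symm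

theorem momentumPrimitive_neg (x : ℝ) :
    momentumPrimitive a b k (-x) = -momentumPrimitive a b k x := by
  simp only [momentumPrimitive, mul_neg, sinh_neg, cosh_neg]
  ring

theorem tendsto_momentumPrimitive_atBot (hb : |b| < a) (hk : 0 < k) :
    Tendsto (momentumPrimitive a b k) atBot (𝓝 (-k)) :=
  ((tendsto_momentumPrimitive_atTop hb hk).comp tendsto_neg_atBot_atTop).neg.congr fun x => by
    simp [momentumPrimitive_neg]

theorem integral_momentumDensity (hb : |b| < a) (hk : 0 < k)
    (hk2 : k ^ 2 = 4 * (a ^ 2 - b ^ 2)) :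
    ∫ x, (-b * profileSq a b k x + profileSq a b k x ^ 2 / 4) = 2 * k := by
  rw [integral_of_hasDerivAt_of_tendsto (hasDerivAt_momentumPrimitive hb hk2)
    (((integrable_profileSq hb hk).const_mul (-b)).add
      ((integrable_profileSq_sq hb hk).div_const 4))
    (tendsto_momentumPrimitive_atBot hb hk) (tendsto_momentumPrimitive_atTop hb hk)]
  ring

end Profile

section Soliton

variable {ω c : ℝ}

theorem abs_half_lt_sqrt (hc : c ^ 2 < 4 * ω) : |c / 2| < √ω := by
  rw [lt_sqrt (abs_nonneg _), sq_abs]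
  linarith

theorem varphi_eq_sqrt_profileSq (hc : c ^ 2 < 4 * ω) (x : ℝ) :
    varphi ω c x = √(profileSq (√ω) (c / 2) (√(4 * ω - c ^ 2)) x) := by
  have hb := abs_half_lt_sqrt hc
  have hp := profileSq_pos hb (sqrt_pos.2 (by linarith : 0 < 4 * ω - c ^ 2)) x
  have hω : √ω ≠ 0 := (lt_of_le_of_lt (abs_nonneg _) hb).ne'
  have hbase : √ω / (4 * ω - c ^ 2) * (cosh (x * √(4 * ω - c ^ 2)) - c / (2 * √ω))
      = (profileSq (√ω) (c / 2) (√(4 * ω - c ^ 2)) x)⁻¹ := by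
    rw [profileSq, inv_div, sq_sqrt (by linarith), mul_comm x]
    field_simp
  rw [varphi, hbase, inv_rpow hp.le, ← rpow_neg hp.le, neg_neg, ← sqrt_eq_rpow]

theorem varphi_sq (hc : c ^ 2 < 4 * ω) (x : ℝ) :
    varphi ω c x ^ 2 = profileSq (√ω) (c / 2) (√(4 * ω - c ^ 2)) x := by
  rw [varphi_eq_sqrt_profileSq hc, sq_sqrt (profileSq_pos (abs_half_lt_sqrt hc)
    (sqrt_pos.2 (by linarith)) x).le]

theorem differentiable_varphi (hc : c ^ 2 < 4 * ω) : Differentiable ℝ (varphi ω c) := by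
  rw [funext (varphi_eq_sqrt_profileSq hc)]
  exact fun x => (differentiable_profileSq (abs_half_lt_sqrt hc) x).sqrt
    (profileSq_pos (abs_half_lt_sqrt hc) (sqrt_pos.2 (by linarith)) x).ne'

theorem hasDerivAt_solProfile_phase (hc : c ^ 2 < 4 * ω) (x : ℝ) :
    HasDerivAt (fun y => c / 2 * y - 1 / 4 * ∫ ξ in Iic y, varphi ω c ξ ^ 2)
      (c / 2 - profileSq (√ω) (c / 2) (√(4 * ω - c ^ 2)) x / 4) x := by
  have hsq : (fun x => varphi ω c x ^ 2) = profileSq (√ω) (c / 2) (√(4 * ω - c ^ 2)) :=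
    funext (varphi_sq hc)
  have hb := abs_half_lt_sqrt hc
  have hI := hasDerivAt_setIntegral_Iic
    (hsq ▸ integrable_profileSq hb (sqrt_pos.2 (by linarith)))
    (hsq ▸ (differentiable_profileSq hb).continuous.continuousAt (x := x))
  refine (((hasDerivAt_id' x).const_mul (c / 2)).sub
    (hI.const_mul (1 / 4))).congr_deriv ?_
  rw [varphi_sq hc]
  ring

theorem im_solProfile_mul_conj_deriv (hc : c ^ 2 < 4 * ω) (x : ℝ) :
    (solProfile ω c x * conj (deriv (solProfile ω c) x)).im
      = -(c / 2) * profileSq (√ω) (c / 2) (√(4 * ω - c ^ 2)) x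
        + profileSq (√ω) (c / 2) (√(4 * ω - c ^ 2)) x ^ 2 / 4 := by
  rw [im_mul_conj_deriv_of_eq_ofReal_mul_exp (u := solProfile ω c) rfl
    (differentiable_varphi hc x) (hasDerivAt_solProfile_phase hc x), varphi_sq hc]
  ring

end Soliton

theorem stmt12_general (ω c : ℝ)
    (hc1 : -2 * Real.sqrt ω < c) (hc2 : c < 2 * Real.sqrt ω) :
    (1 / 2) * (∫ x, (solProfile ω c x
        * (starRingEnd ℂ) (deriv (solProfile ω c) x)).im)
      = Real.sqrt (4 * ω - c ^ 2) := by
  have hb : |c / 2| < √ω := abs_lt.2 ⟨by linarith, by linarith⟩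
  have hc : c ^ 2 < 4 * ω := by
    have := (lt_sqrt (abs_nonneg _)).1 hb
    rw [sq_abs] at this
    linarith
  have hk2 : √(4 * ω - c ^ 2) ^ 2 = 4 * (√ω ^ 2 - (c / 2) ^ 2) := by
    rw [sq_sqrt (by linarith), sq_sqrt (by nlinarith)]
    ring
  rw [integral_congr_ae (.of_forall (im_solProfile_mul_conj_deriv hc)),
    integral_momentumDensity hb (sqrt_pos.2 (by linarith)) hk2]
  ring

/-- the momentum of the soliton profile is
`P(φ_{ω,c}) = (1/2)Im∫ φ_{ω,c}·conj(∂_x φ_{ω,c}) = √(4ω - c²)`. -/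
theorem stmt12 (ω c : ℝ) (hω : 0 < ω)
    (hc1 : -2 * Real.sqrt ω < c) (hc2 : c < 2 * Real.sqrt ω) :
    (1 / 2) * (∫ x, (solProfile ω c x
        * (starRingEnd ℂ) (deriv (solProfile ω c) x)).im)
      = Real.sqrt (4 * ω - c ^ 2) :=
  stmt12_general ω c hc1 hc2
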